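/- Let V: Ω → ℝ be C¹ on an open set Ω ⊆ ℝⁿ and let r(t), t ∈ (a,b), be a maximal solution of r'' = −∇V(r). Suppose there exist values v₀ < v₁ with dist(V⁻¹(v₀), V⁻¹(v₁)) > 0, and an infinite sequence t₁ < s₁ < t₂ < s₂ < ⋯ in (a,b) with V(r(tᵢ)) = v₀ and V(r(sᵢ)) = v₁ for all i. Then b = +∞. -/

import Mathlib

open Real Set

/-!
Along a solution of `r'' = -∇V(r)` the energy `V(r) + ‖r'‖² / 2` is a constant `e`. Between a
visit to the level `v₀` and the next visit to the level `v₁`, after the last visit to `v₀` the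
potential stays `≥ v₀`, so the speed is at most `√(2(e - v₀))` while the path covers a distance
`≥ δ`. Each crossing thus takes time at least `δ / √(2(e - v₀))`, and infinitely many of them do
not fit before a finite endpoint `b`.
-/

noncomputable def energy {F : Type*} [Norm F] (V : F → ℝ) (x v : F) : ℝ := V x + ‖v‖ ^ 2 / 2

theorem norm_le_sqrt_of_energy_eq {F : Type*} [Norm F] {V : F → ℝ} {x v : F} {e c : ℝ}
    (he : energy V x v = e) (hc : c ≤ V x) : ‖v‖ ≤ √(2 * (e - c)) :=
  Real.le_sqrt_of_sq_le (by unfold energy at he; linarith)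

variable {F : Type*} [NormedAddCommGroup F] [InnerProductSpace ℝ F]

section Gradient

variable [CompleteSpace F]

theorem hasDerivAt_energy {V : F → ℝ} {r r' : ℝ → F} {t : ℝ}
    (hV : DifferentiableAt ℝ V (r t)) (hr : HasDerivAt r (r' t) t)
    (hr' : HasDerivAt r' (-gradient V (r t)) t) :
    HasDerivAt (fun t ↦ energy V (r t) (r' t)) 0 t := by
  have hpot : HasDerivAt (V ∘ r) (inner ℝ (gradient V (r t)) (r' t)) t := by
    simpa using hV.hasGradientAt.hasFDerivAt.comp_hasDerivAt t hr
  have hkin := (hr'.inner ℝ hr').div_const 2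
  simp only [real_inner_self_eq_norm_sq, inner_neg_right, real_inner_comm (r' t)] at hkin
  exact (hpot.add hkin).congr_deriv (by rw [real_inner_comm]; ring)

theorem exists_energy_eq_of_isPreconnected {V : F → ℝ} {r r' : ℝ → F} {s : Set ℝ}
    (hs : IsOpen s) (hs' : IsPreconnected s)
    (hV : ∀ t ∈ s, DifferentiableAt ℝ V (r t)) (hr : ∀ t ∈ s, HasDerivAt r (r' t) t)
    (hr' : ∀ t ∈ s, HasDerivAt r' (-gradient V (r t)) t) :
    ∃ e, ∀ t ∈ s, energy V (r t) (r' t) = e := by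
  have hE : ∀ t ∈ s, HasDerivAt (fun t ↦ energy V (r t) (r' t)) 0 t := fun t ht ↦
    hasDerivAt_energy (hV t ht) (hr t ht) (hr' t ht)
  exact hs.exists_is_const_of_deriv_eq_zero hs'
    (fun t ht ↦ (hE t ht).differentiableAt.differentiableWithinAt) (fun t ht ↦ (hE t ht).deriv)

end Gradient

theorem exists_last_eq_of_le {g : ℝ → ℝ} {t₀ t₁ v₀ : ℝ} (ht : t₀ ≤ t₁)
    (hg : ContinuousOn g (Icc t₀ t₁)) (h₀ : g t₀ = v₀) (h₁ : v₀ ≤ g t₁) :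
    ∃ t ∈ Icc t₀ t₁, g t = v₀ ∧ ∀ u ∈ Icc t t₁, v₀ ≤ g u := by
  set A := Icc t₀ t₁ ∩ g ⁻¹' {v₀}
  have hA : IsClosed A := hg.preimage_isClosed_of_isClosed isClosed_Icc isClosed_singleton
  have hAne : A.Nonempty := ⟨t₀, ⟨left_mem_Icc.2 ht, h₀⟩⟩
  have hAbdd : BddAbove A := bddAbove_Icc.mono inter_subset_left
  obtain ⟨hmem, hlast⟩ := hA.csSup_mem hAne hAbdd
  refine ⟨sSup A, hmem, hlast, fun u hu ↦ le_of_not_gt fun hlt ↦ ?_⟩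
  -- a later return to the level `v₀` would contradict maximality
  have hsub : Icc u t₁ ⊆ Icc t₀ t₁ := Icc_subset_Icc_left (hmem.1.trans hu.1)
  obtain ⟨w, hw, hgw⟩ := intermediate_value_Icc hu.2 (hg.mono hsub) ⟨hlt.le, h₁⟩
  have hwA : w ≤ sSup A := le_csSup hAbdd ⟨hsub hw, hgw⟩
  have hu_eq : u = sSup A := le_antisymm (hw.1.trans hwA) hu.1
  exact hlt.ne (hu_eq ▸ hlast)

theorem le_sqrt_mul_sub_of_level_crossing {V : F → ℝ} {r r' : ℝ → F} {t₀ t₁ e v₀ δ : ℝ}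
    (ht : t₀ ≤ t₁) (hr : ∀ t ∈ Icc t₀ t₁, HasDerivAt r (r' t) t)
    (hV : ContinuousOn (V ∘ r) (Icc t₀ t₁)) (he : ∀ t ∈ Icc t₀ t₁, energy V (r t) (r' t) = e)
    (h₀ : V (r t₀) = v₀) (h₁ : v₀ ≤ V (r t₁))
    (hsep : ∀ t ∈ Icc t₀ t₁, V (r t) = v₀ → δ ≤ dist (r t) (r t₁)) :
    δ ≤ √(2 * (e - v₀)) * (t₁ - t₀) := by
  obtain ⟨t, htI, hlev, habove⟩ := exists_last_eq_of_le ht hV h₀ h₁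
  have hsub : Icc t t₁ ⊆ Icc t₀ t₁ := Icc_subset_Icc_left htI.1
  have hmv := norm_image_sub_le_of_norm_deriv_le_segment'
    (fun u hu ↦ (hr u (hsub hu)).hasDerivWithinAt)
    (fun u hu ↦ norm_le_sqrt_of_energy_eq (he u (hsub (Ico_subset_Icc_self hu)))
      (habove u (Ico_subset_Icc_self hu))) t₁ (right_mem_Icc.2 htI.2)
  calc δ ≤ dist (r t) (r t₁) := hsep t htI hlev
    _ = ‖r t₁ - r t‖ := by rw [dist_comm, dist_eq_norm]
    _ ≤ √(2 * (e - v₀)) * (t₁ - t) := hmv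
    _ ≤ √(2 * (e - v₀)) * (t₁ - t₀) := by gcongr; exact htI.1

theorem not_bddAbove_range_of_add_le {u : ℕ → ℝ} {c : ℝ} (hc : 0 < c)
    (hu : ∀ i, u i + c ≤ u (i + 1)) : ¬BddAbove (range u) := by
  have hlin : ∀ i : ℕ, u 0 + i * c ≤ u i := by
    intro i
    induction i with
    | zero => simp
    | succ k ih => push_cast; linarith [hu k]
  rintro ⟨B, hB⟩
  obtain ⟨m, hm⟩ := exists_nat_gt ((B - u 0) / c)
  rw [div_lt_iff₀ hc] at hm
  linarith [hB (mem_range_self m), hlin m]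

theorem no_finite_escape {n : ℕ} (Ω : Set (EuclideanSpace ℝ (Fin n))) (hΩ : IsOpen Ω)
    (V : EuclideanSpace ℝ (Fin n) → ℝ) (hV : ContDiffOn ℝ 1 V Ω)
    (a b : ℝ) (r r' : ℝ → EuclideanSpace ℝ (Fin n))
    (hmem : ∀ t ∈ Set.Ioo a b, r t ∈ Ω)
    (hr : ∀ t ∈ Set.Ioo a b, HasDerivAt r (r' t) t)
    (hr' : ∀ t ∈ Set.Ioo a b, HasDerivAt r' (-gradient V (r t)) t)
    (v₀ v₁ : ℝ) (hv : v₀ < v₁) (δ : ℝ) (hδ : 0 < δ)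
    (hsep : ∀ p ∈ Ω, ∀ q ∈ Ω, V p = v₀ → V q = v₁ → δ ≤ dist p q)
    (ts ss : ℕ → ℝ)
    (hts : ∀ i, ts i ∈ Set.Ioo a b)
    (horder : ∀ i, ts i < ss i ∧ ss i < ts (i + 1))
    (ht : ∀ i, V (r (ts i)) = v₀) (hs : ∀ i, V (r (ss i)) = v₁) :
    False := by
  have hVr : ∀ t ∈ Ioo a b, DifferentiableAt ℝ V (r t) := fun t htI ↦
    (hV.contDiffAt (hΩ.mem_nhds (hmem t htI))).differentiableAt one_ne_zero
  obtain ⟨e, he⟩ := exists_energy_eq_of_isPreconnected isOpen_Ioo isPreconnected_Ioo hVr hr hr'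
  have hsub : ∀ i, Icc (ts i) (ss i) ⊆ Ioo a b := fun i ↦
    Icc_subset_Ioo (hts i).1 ((horder i).2.trans (hts (i + 1)).2)
  have hcross : ∀ i, δ ≤ √(2 * (e - v₀)) * (ss i - ts i) := fun i ↦
    le_sqrt_mul_sub_of_level_crossing (horder i).1.le (fun t h ↦ hr t (hsub i h))
      (fun t h ↦ ((hVr t (hsub i h)).continuousAt.comp
        (hr t (hsub i h)).continuousAt).continuousWithinAt)
      (fun t h ↦ he t (hsub i h)) (ht i) (hv.le.trans_eq (hs i).symm)
      (fun t h hlev ↦ hsep _ (hmem t (hsub i h)) _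
        (hmem _ (hsub i (right_mem_Icc.2 (horder i).1.le))) hlev (hs i))
  have hspeed : 0 < √(2 * (e - v₀)) :=
    pos_of_mul_pos_left (hδ.trans_le (hcross 0)) (sub_pos.2 (horder 0).1).le
  refine not_bddAbove_range_of_add_le (div_pos hδ hspeed) (fun i ↦ ?_)
    ⟨b, forall_mem_range.2 fun i ↦ (hts i).2.le⟩
  linarith [(div_le_iff₀' hspeed).2 (hcross i), (horder i).2]
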